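/- Let k be an integer, j ≥ 0 an integer, and s a real number with 1 < s and 1 < k − s. Then the j-th iterated derivative at s of the function x ↦ ζ'(x)/ζ(x) − ζ'(k−x)/ζ(k−x) equals Σ_{r=1}^{∞} Λ(r) · (log r)^j · ( (−1)^{j+1} · r^{−s} + r^{−(k−s)} ), where Λ is the von Mangoldt function. -/

import Mathlib

open Complex

open LSeries ArithmeticFunction Filter Topology

open scoped LSeries.notation

/-!
On `re x > 1` we have `ζ'/ζ = -L(Λ)`, so near `s` the function equals `L(Λ, k - x) - L(Λ, x)`.
Differentiating an absolutely convergent L-series `j` times multiplies its `n`-th coefficient by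
`(-log n)^j`; for the reflected term the chain rule contributes another `(-1)^j`, which cancels.
-/

lemma abscissaOfAbsConv_vonMangoldt_le_one : abscissaOfAbsConv ↗Λ ≤ 1 :=
  abscissaOfAbsConv_le_of_forall_lt_LSeriesSummable fun _ hy ↦
    LSeriesSummable_vonMangoldt (by simpa using hy)

lemma deriv_riemannZeta_div_eq_neg_LSeries_vonMangoldt {s : ℂ} (hs : 1 < s.re) :
    deriv riemannZeta s / riemannZeta s = -L ↗Λ s := by
  rw [LSeries_vonMangoldt_eq_deriv_riemannZeta_div hs, neg_div, neg_neg]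

lemma logDeriv_riemannZeta_sub_comp_const_sub_eventuallyEq (c : ℂ) {s : ℂ} (hs : 1 < s.re)
    (hcs : 1 < (c - s).re) :
    (fun x ↦ deriv riemannZeta x / riemannZeta x -
        deriv riemannZeta (c - x) / riemannZeta (c - x)) =ᶠ[𝓝 s]
      fun x ↦ L ↗Λ (c - x) - L ↗Λ x := by
  have hre : ∀ᶠ x in 𝓝 s, 1 < x.re := continuous_re.continuousAt.eventually_const_lt hs
  have hcre : ∀ᶠ x in 𝓝 s, 1 < (c - x).re :=
    (continuous_re.comp (continuous_const.sub continuous_id)).continuousAt.eventually_const_lt hcs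
  filter_upwards [hre, hcre] with x hx hcx
  rw [deriv_riemannZeta_div_eq_neg_LSeries_vonMangoldt hx,
    deriv_riemannZeta_div_eq_neg_LSeries_vonMangoldt hcx, neg_sub_neg]

lemma logMul_iterate_apply (f : ℕ → ℂ) (j n : ℕ) :
    logMul^[j] f n = Complex.log n ^ j * f n := by
  induction j with
  | zero => simp
  | succ j ih => rw [Function.iterate_succ_apply', logMul, ih, pow_succ, mul_assoc, mul_left_comm]

lemma iteratedDeriv_LSeries_comp_const_sub {f : ℕ → ℂ} (j : ℕ) (c : ℂ) {s : ℂ}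
    (h : abscissaOfAbsConv f < (c - s).re) :
    iteratedDeriv j (fun x ↦ L f (c - x)) s = L (logMul^[j] f) (c - s) := by
  simp only [iteratedDeriv_comp_const_sub]
  rw [LSeries_iteratedDeriv j h, smul_eq_mul, ← mul_assoc, ← mul_pow]
  simp

lemma iteratedDeriv_LSeries_comp_const_sub_sub_LSeries {f : ℕ → ℂ} (j : ℕ) (c : ℂ) {s : ℂ}
    (hs : abscissaOfAbsConv f < s.re) (hcs : abscissaOfAbsConv f < (c - s).re) :
    iteratedDeriv j (fun x ↦ L f (c - x) - L f x) s =
      (-1) ^ (j + 1) * L (logMul^[j] f) s + L (logMul^[j] f) (c - s) := by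
  have hreflect : ContDiffAt ℂ j (fun x ↦ L f (c - x)) s :=
    (LSeries_analyticOnNhd f (c - s) hcs).contDiffAt.comp s (contDiffAt_const.sub contDiffAt_id)
  rw [iteratedDeriv_fun_sub hreflect (LSeries_analyticOnNhd f s hs).contDiffAt,
    iteratedDeriv_LSeries_comp_const_sub j c hcs, LSeries_iteratedDeriv j hs, pow_succ]
  ring

lemma mul_LSeries_add_mul_LSeries_eq_tsum {f : ℕ → ℂ} {s w : ℂ} (hs : LSeriesSummable f s)
    (hw : LSeriesSummable f w) (a b : ℂ) :
    a * L f s + b * L f w =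
      ∑' r : ℕ, f (r + 1) * (a * ((r + 1 : ℕ) : ℂ) ^ (-s) + b * ((r + 1 : ℕ) : ℂ) ^ (-w)) := by
  have hsum := (hs.mul_left a).add (hw.mul_left b)
  rw [LSeries, LSeries, ← tsum_mul_left, ← tsum_mul_left,
    ← (hs.mul_left a).tsum_add (hw.mul_left b), hsum.tsum_eq_zero_add]
  simp only [term_zero, mul_zero, add_zero, zero_add]
  refine tsum_congr fun r ↦ ?_
  rw [term_of_ne_zero r.succ_ne_zero, term_of_ne_zero r.succ_ne_zero, cpow_neg, cpow_neg]
  ring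

theorem iteratedDeriv_zetaLogDeriv_diff_eq_tsum_vonMangoldt
    (k : ℤ) (j : ℕ) (s : ℝ) (hs : 1 < s) (hks : 1 < (k : ℝ) - s) :
    iteratedDeriv j
      (fun x : ℂ => deriv riemannZeta x / riemannZeta x -
        deriv riemannZeta ((k : ℂ) - x) / riemannZeta ((k : ℂ) - x)) (s : ℂ) =
    ∑' r : ℕ,
      ((ArithmeticFunction.vonMangoldt (r + 1) : ℝ) : ℂ) *
        ((Real.log (r + 1) : ℝ) : ℂ) ^ j *
        ((-1 : ℂ) ^ (j + 1) * ((r + 1 : ℕ) : ℂ) ^ (-(s : ℂ)) +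
          ((r + 1 : ℕ) : ℂ) ^ (-((k : ℂ) - (s : ℂ)))) := by
  have hs' : 1 < (s : ℂ).re := by simpa using hs
  have hks' : 1 < ((k : ℂ) - s).re := by simpa using hks
  have habs : ∀ {z : ℂ}, 1 < z.re → abscissaOfAbsConv ↗Λ < z.re := fun hz ↦
    abscissaOfAbsConv_vonMangoldt_le_one.trans_lt (mod_cast hz)
  have hsum : ∀ {z : ℂ}, 1 < z.re → LSeriesSummable (logMul^[j] ↗Λ) z := fun hz ↦
    LSeriesSummable_of_abscissaOfAbsConv_lt_re (by rw [absicssaOfAbsConv_logPowMul]; exact habs hz)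
  rw [(logDeriv_riemannZeta_sub_comp_const_sub_eventuallyEq _ hs' hks').iteratedDeriv_eq,
    iteratedDeriv_LSeries_comp_const_sub_sub_LSeries j _ (habs hs') (habs hks'),
    ← one_mul (L _ (_ - _)), mul_LSeries_add_mul_LSeries_eq_tsum (hsum hs') (hsum hks')]
  refine tsum_congr fun r ↦ ?_
  rw [logMul_iterate_apply, ← natCast_log, one_mul]
  push_cast
  ring
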